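/- Let M ∈ ℝ^{m×n} with m ≥ n, let Π be an n×n permutation matrix, and let MΠ = QR be a partial QR factorization with block size k whose blocks are R₁₁ ∈ ℝ^{k×k} (assumed invertible), R₁₂ ∈ ℝ^{k×(n−k)}, R₂₂ ∈ ℝ^{(m−k)×(n−k)}. Let f ≥ 1. If ρ(R,k) ≤ f, then for all 1 ≤ i ≤ k and all 1 ≤ j ≤ n−k with σ_{j+k}(M) ≠ 0 one has: 1 ≤ σ_i(M)/σ_i(R₁₁) ≤ √(1 + f²·k·(n−k)), 1 ≤ σ_j(R₂₂)/σ_{j+k}(M) ≤ √(1 + f²·k·(n−k)), and |(R₁₁⁻¹ R₁₂)_{i,j}| ≤ f. -/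

import Mathlib

open Matrix

/-- Euclidean (ℓ₂) norm of a vector in `ℝ^m`. -/
noncomputable def norm2 {m : ℕ} (x : Fin m → ℝ) : ℝ := Real.sqrt (x ⬝ᵥ x)

/-- `Ω` is an `ε`-embedding of the subspace `V ⊆ ℝ^m`:
`|⟨Ωx, Ωy⟩ − ⟨x, y⟩| ≤ ε‖x‖₂‖y‖₂` for all `x, y ∈ V`. -/
def IsEmbedding {d m : ℕ} (ε : ℝ) (Ω : Matrix (Fin d) (Fin m) ℝ)
    (V : Submodule ℝ (Fin m → ℝ)) : Prop :=
  ∀ x ∈ V, ∀ y ∈ V, |(Ω.mulVec x) ⬝ᵥ (Ω.mulVec y) - x ⬝ᵥ y| ≤ ε * norm2 x * norm2 y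

/-- The `i`-th largest singular value (`0`-indexed) of a real matrix `A`:
the square root of the `i`-th largest eigenvalue of `AᵀA`. -/
noncomputable def singularValues {m n : ℕ} (A : Matrix (Fin m) (Fin n) ℝ) (i : Fin n) : ℝ :=
  Real.sqrt ((show (Aᵀ * A).IsHermitian by
      rw [← Matrix.conjTranspose_eq_transpose_of_trivial]
      exact Matrix.isHermitian_conjTranspose_mul_self A).eigenvalues
    (Tuple.sort (show (Aᵀ * A).IsHermitian by
      rw [← Matrix.conjTranspose_eq_transpose_of_trivial]
      exact Matrix.isHermitian_conjTranspose_mul_self A).eigenvalues i.rev))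

/-- `P` is a permutation matrix. -/
def IsPermMatrix {n : ℕ} (P : Matrix (Fin n) (Fin n) ℝ) : Prop :=
  ∃ σ : Equiv.Perm (Fin n), P = σ.permMatrix ℝ

/-- `A = Q * [[R₁₁, R₁₂], [0, R₂₂]]` is a partial QR factorization with block size `k`,
where `A` is `(k+m') × (k+n')`, `Q` is orthogonal and `R₁₁` is `k × k` upper triangular. -/
def PartialQR {k m' n' : ℕ} (A : Matrix (Fin (k + m')) (Fin (k + n')) ℝ)
    (Q : Matrix (Fin (k + m')) (Fin (k + m')) ℝ)
    (R11 : Matrix (Fin k) (Fin k) ℝ) (R12 : Matrix (Fin k) (Fin n') ℝ)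
    (R22 : Matrix (Fin m') (Fin n') ℝ) : Prop :=
  Qᵀ * Q = 1 ∧ (∀ i j : Fin k, (j : ℕ) < (i : ℕ) → R11 i j = 0) ∧
    A = Q * (Matrix.reindex finSumFinEquiv finSumFinEquiv (Matrix.fromBlocks R11 R12 0 R22))

/-- `ω_i(A)`: the ℓ₂-norm of the `i`-th row of `A⁻¹`. -/
noncomputable def omega_ {k : ℕ} (A : Matrix (Fin k) (Fin k) ℝ) (i : Fin k) : ℝ :=
  norm2 (fun l => A⁻¹ i l)

/-- `γ_j(B)`: the ℓ₂-norm of the `j`-th column of `B`. -/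
noncomputable def gamma_ {p q : ℕ} (B : Matrix (Fin p) (Fin q) ℝ) (j : Fin q) : ℝ :=
  norm2 (fun l => B l j)

/-- `ρ(R, k)` for `R = [[R₁₁, R₁₂], [0, R₂₂]]`:
`max_{i,j} sqrt(((R₁₁⁻¹R₁₂)_{i,j})² + ω_i(R₁₁)²·γ_j(R₂₂)²)`. -/
noncomputable def rho {k m' n' : ℕ} (R11 : Matrix (Fin k) (Fin k) ℝ)
    (R12 : Matrix (Fin k) (Fin n') ℝ) (R22 : Matrix (Fin m') (Fin n') ℝ) : ℝ :=
  ⨆ i : Fin k, ⨆ j : Fin n',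
    Real.sqrt (((R11⁻¹ * R12) i j) ^ 2 + (omega_ R11 i) ^ 2 * (gamma_ R22 j) ^ 2)

/-- The volume of `A ∈ ℝ^{m×n}`: `V(A) = sqrt(det(AᵀA))`. -/
noncomputable def vol {m n : ℕ} (A : Matrix (Fin m) (Fin n) ℝ) : ℝ :=
  Real.sqrt (Matrix.det (Aᵀ * A))

/-- The angle between two vectors: `arccos(⟨u,w⟩/(‖u‖₂‖w‖₂))`. -/
noncomputable def angleVec {m : ℕ} (u w : Fin m → ℝ) : ℝ :=
  Real.arccos ((u ⬝ᵥ w) / (norm2 u * norm2 w))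

/-- The angle between a vector and a subspace:
`arccos( max over nonzero u ∈ K of ⟨v,u⟩/(‖v‖₂‖u‖₂) )`. -/
noncomputable def angleSub {m : ℕ} (v : Fin m → ℝ) (K : Submodule ℝ (Fin m → ℝ)) : ℝ :=
  Real.arccos (sSup {c : ℝ | ∃ u ∈ K, u ≠ 0 ∧ c = (v ⬝ᵥ u) / (norm2 v * norm2 u)})

/-- `P` is the orthogonal projector onto the subspace `K` (w.r.t. the dot product). -/
def IsOrthProj {m : ℕ} (K : Submodule ℝ (Fin m → ℝ))
    (P : (Fin m → ℝ) →ₗ[ℝ] (Fin m → ℝ)) : Prop :=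
  (∀ v, P v ∈ K) ∧ (∀ u ∈ K, P u = u) ∧ (∀ v, ∀ u ∈ K, (v - P v) ⬝ᵥ u = 0)

/-- Thin QR factorization `A = Q R` with `Q ∈ ℝ^{m×k}` having orthonormal columns and
`R ∈ ℝ^{k×k}` upper triangular. -/
def ThinQR {m k : ℕ} (A Q : Matrix (Fin m) (Fin k) ℝ) (R : Matrix (Fin k) (Fin k) ℝ) : Prop :=
  Qᵀ * Q = 1 ∧ (∀ a b : Fin k, (b : ℕ) < (a : ℕ) → R a b = 0) ∧ A = Q * R

/-- Frobenius norm of a real matrix. -/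
noncomputable def frobNorm {p q : ℕ} (A : Matrix (Fin p) (Fin q) ℝ) : ℝ :=
  Real.sqrt (∑ i, ∑ j, A i j ^ 2)

/-- Spectral norm of a real matrix: sup of `‖Ax‖₂` over the unit ball. -/
noncomputable def specNorm {p q : ℕ} (A : Matrix (Fin p) (Fin q) ℝ) : ℝ :=
  sSup {r : ℝ | ∃ x : Fin q → ℝ, norm2 x ≤ 1 ∧ r = norm2 (A.mulVec x)}
namespace RRQR
open Matrix BigOperators Module


variable {N : ℕ}

lemma dot_nonneg (x : Fin N → ℝ) : 0 ≤ x ⬝ᵥ x :=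
  Finset.sum_nonneg fun i _ => mul_self_nonneg _

lemma dot_pos {x : Fin N → ℝ} (hx : x ≠ 0) : 0 < x ⬝ᵥ x :=
  lt_of_le_of_ne (dot_nonneg x) (fun h => hx (dotProduct_self_eq_zero.mp h.symm))

noncomputable def frob2 {m n : ℕ} (A : Matrix (Fin m) (Fin n) ℝ) : ℝ := ∑ i, ∑ j, A i j ^ 2

lemma frob2_nonneg {m n : ℕ} (A : Matrix (Fin m) (Fin n) ℝ) : 0 ≤ frob2 A :=
  Finset.sum_nonneg fun i _ => Finset.sum_nonneg fun j _ => sq_nonneg _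

lemma dot_tmul {m n : ℕ} (A : Matrix (Fin m) (Fin n) ℝ) (x y : Fin n → ℝ) :
    x ⬝ᵥ ((Aᵀ * A) *ᵥ y) = (A *ᵥ x) ⬝ᵥ (A *ᵥ y) := by
  rw [← Matrix.mulVec_mulVec, Matrix.dotProduct_mulVec, Matrix.vecMul_transpose]

lemma dot_cmul {m n : ℕ} (A : Matrix (Fin m) (Fin n) ℝ) (x y : Fin n → ℝ) :
    x ⬝ᵥ ((Aᴴ * A) *ᵥ y) = (A *ᵥ x) ⬝ᵥ (A *ᵥ y) := by
  rw [Matrix.conjTranspose_eq_transpose_of_trivial]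
  exact dot_tmul A x y

lemma mulVec_dot_le {m n : ℕ} (A : Matrix (Fin m) (Fin n) ℝ) (b : Fin n → ℝ) :
    (A *ᵥ b) ⬝ᵥ (A *ᵥ b) ≤ frob2 A * (b ⬝ᵥ b) := by
  unfold frob2
  rw [Finset.sum_mul]
  apply Finset.sum_le_sum
  intro i _
  have h := Finset.sum_mul_sq_le_sq_mul_sq Finset.univ (fun l => A i l) b
  simpa [dotProduct, Matrix.mulVec, sq] using h

lemma dot_le_sqrt (a c : Fin N → ℝ) :
    a ⬝ᵥ c ≤ Real.sqrt (a ⬝ᵥ a) * Real.sqrt (c ⬝ᵥ c) := by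
  have h := Finset.sum_mul_sq_le_sq_mul_sq Finset.univ a c
  have h2 : (a ⬝ᵥ c) ^ 2 ≤ (a ⬝ᵥ a) * (c ⬝ᵥ c) := by
    simpa [dotProduct, sq] using h
  calc a ⬝ᵥ c ≤ |a ⬝ᵥ c| := le_abs_self _
    _ = Real.sqrt ((a ⬝ᵥ c) ^ 2) := (Real.sqrt_sq_eq_abs _).symm
    _ ≤ Real.sqrt ((a ⬝ᵥ a) * (c ⬝ᵥ c)) := Real.sqrt_le_sqrt h2
    _ = _ := Real.sqrt_mul (dot_nonneg a) _



variable {N : ℕ} {S : Matrix (Fin N) (Fin N) ℝ}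

/-- eigenvalues sorted increasingly -/
noncomputable def sEig (hS : S.IsHermitian) : Fin N → ℝ :=
  fun p => hS.eigenvalues (Tuple.sort hS.eigenvalues p)

noncomputable def wVec (hS : S.IsHermitian) : Fin N → (Fin N → ℝ) :=
  fun p => (WithLp.equiv 2 _) (hS.eigenvectorBasis (Tuple.sort hS.eigenvalues p))

lemma sEig_mono (hS : S.IsHermitian) : Monotone (sEig hS) :=
  Tuple.monotone_sort hS.eigenvalues

lemma wVec_eig (hS : S.IsHermitian) (p : Fin N) :
    S *ᵥ wVec hS p = sEig hS p • wVec hS p :=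
  hS.mulVec_eigenvectorBasis _

lemma inner_eq_dot (u v : EuclideanSpace ℝ (Fin N)) :
    inner ℝ u v = ((WithLp.equiv 2 _) u) ⬝ᵥ ((WithLp.equiv 2 _) v) := by
  simp [PiLp.inner_apply, dotProduct, mul_comm]

lemma wVec_dot (hS : S.IsHermitian) (p q : Fin N) :
    wVec hS p ⬝ᵥ wVec hS q = if p = q then 1 else 0 := by
  have h := orthonormal_iff_ite.mp hS.eigenvectorBasis.orthonormal
    (Tuple.sort hS.eigenvalues p) (Tuple.sort hS.eigenvalues q)
  rw [inner_eq_dot] at h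
  rw [wVec, wVec, h]
  simp [EmbeddingLike.apply_eq_iff_eq]



variable {N : ℕ} {S : Matrix (Fin N) (Fin N) ℝ}

lemma sum_smul_dot {ι : Type*} [Fintype ι] (v : ι → (Fin N → ℝ)) (c : ι → ℝ)
    (y : Fin N → ℝ) : (∑ p, c p • v p) ⬝ᵥ y = ∑ p, c p * (v p ⬝ᵥ y) := by
  simp only [dotProduct, Finset.sum_apply, Pi.smul_apply, smul_eq_mul,
    Finset.sum_mul, Finset.mul_sum]
  rw [Finset.sum_comm]
  congr 1; funext p; congr 1; funext i; ring

lemma dot_sum_sum {ι : Type*} [Fintype ι] [DecidableEq ι] (v : ι → (Fin N → ℝ))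
    (hv : ∀ p q, v p ⬝ᵥ v q = if p = q then 1 else 0) (c d : ι → ℝ) :
    (∑ p, c p • v p) ⬝ᵥ (∑ q, d q • v q) = ∑ p, c p * d p := by
  rw [sum_smul_dot]
  congr 1; funext p
  have : v p ⬝ᵥ (∑ q, d q • v q) = ∑ q, d q * (v p ⬝ᵥ v q) := by
    simp only [dotProduct, Finset.sum_apply, Pi.smul_apply, smul_eq_mul,
      Finset.mul_sum]
    rw [Finset.sum_comm]
    congr 1; funext q; congr 1; funext i; ring
  rw [this]
  simp only [hv]
  simp

lemma lin_indep_of_dot {ι : Type*} [Fintype ι] [DecidableEq ι] (v : ι → (Fin N → ℝ))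
    (hv : ∀ p q, v p ⬝ᵥ v q = if p = q then 1 else 0) : LinearIndependent ℝ v := by
  rw [Fintype.linearIndependent_iff]
  intro c hc p
  have h : (∑ q, c q • v q) ⬝ᵥ v p = c p := by
    rw [sum_smul_dot]
    simp only [hv]
    simp
  rw [hc] at h
  simpa using h.symm

noncomputable def Vspan (hS : S.IsHermitian) (s : Finset (Fin N)) : Submodule ℝ (Fin N → ℝ) :=
  Submodule.span ℝ (Set.range (fun p : s => wVec hS p))

lemma wVec_dot' (hS : S.IsHermitian) (s : Finset (Fin N)) (p q : s) :
    wVec hS p ⬝ᵥ wVec hS q = if p = q then 1 else 0 := by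
  rw [wVec_dot hS]
  exact if_congr Subtype.ext_iff.symm rfl rfl

lemma finrank_Vspan (hS : S.IsHermitian) (s : Finset (Fin N)) :
    finrank ℝ (Vspan hS s) = s.card := by
  rw [Vspan, finrank_span_eq_card (lin_indep_of_dot _ (wVec_dot' hS s)), Fintype.card_coe]

lemma Vspan_expansion (hS : S.IsHermitian) (s : Finset (Fin N)) {x : Fin N → ℝ}
    (hx : x ∈ Vspan hS s) :
    ∃ c : s → ℝ, x ⬝ᵥ (S *ᵥ x) = ∑ p : s, sEig hS p * (c p) ^ 2 ∧
      x ⬝ᵥ x = ∑ p : s, (c p) ^ 2 := by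
  rw [Vspan, Submodule.mem_span_range_iff_exists_fun] at hx
  obtain ⟨c, hc⟩ := hx
  refine ⟨c, ?_, ?_⟩
  · have hSx : S *ᵥ x = ∑ p : s, (c p * sEig hS p) • wVec hS p := by
      rw [← hc, ← Matrix.mulVecLin_apply, map_sum]
      congr 1; funext p
      rw [LinearMap.map_smul, Matrix.mulVecLin_apply, wVec_eig]
      rw [smul_smul]
    rw [hSx, ← hc, dot_sum_sum _ (wVec_dot' hS s)]
    congr 1; funext p; ring
  · rw [← hc, dot_sum_sum _ (wVec_dot' hS s)]
    congr 1; funext p; ring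

lemma Vspan_ray_le (hS : S.IsHermitian) (s : Finset (Fin N)) (lam : ℝ)
    (hlam : ∀ p ∈ s, sEig hS p ≤ lam) {x : Fin N → ℝ} (hx : x ∈ Vspan hS s) :
    x ⬝ᵥ (S *ᵥ x) ≤ lam * (x ⬝ᵥ x) := by
  obtain ⟨c, h1, h2⟩ := Vspan_expansion hS s hx
  rw [h1, h2, Finset.mul_sum]
  exact Finset.sum_le_sum fun p _ =>
    mul_le_mul_of_nonneg_right (hlam p p.2) (sq_nonneg _)

lemma Vspan_ray_ge (hS : S.IsHermitian) (s : Finset (Fin N)) (lam : ℝ)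
    (hlam : ∀ p ∈ s, lam ≤ sEig hS p) {x : Fin N → ℝ} (hx : x ∈ Vspan hS s) :
    lam * (x ⬝ᵥ x) ≤ x ⬝ᵥ (S *ᵥ x) := by
  obtain ⟨c, h1, h2⟩ := Vspan_expansion hS s hx
  rw [h1, h2, Finset.mul_sum]
  exact Finset.sum_le_sum fun p _ =>
    mul_le_mul_of_nonneg_right (hlam p p.2) (sq_nonneg _)


variable {N : ℕ} {S : Matrix (Fin N) (Fin N) ℝ}

noncomputable def dEig (hS : S.IsHermitian) (i : Fin N) : ℝ := sEig hS i.rev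

lemma dEig_anti (hS : S.IsHermitian) : Antitone (dEig hS) :=
  fun i j hij => sEig_mono hS (Fin.rev_le_rev.mpr hij)

/-- there is an (i+1)-dimensional subspace on which the Rayleigh quotient is ≥ dEig i -/
lemma exists_top (hS : S.IsHermitian) (i : Fin N) :
    ∃ V : Submodule ℝ (Fin N → ℝ), finrank ℝ V = (i : ℕ) + 1 ∧
      ∀ x ∈ V, dEig hS i * (x ⬝ᵥ x) ≤ x ⬝ᵥ (S *ᵥ x) := by
  refine ⟨Vspan hS (Finset.Ici i.rev), ?_, fun x hx => Vspan_ray_ge hS _ _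
    (fun p hp => sEig_mono hS (Finset.mem_Ici.mp hp)) hx⟩
  rw [finrank_Vspan, Fin.card_Ici, Fin.val_rev]
  omega

lemma exists_bot (hS : S.IsHermitian) (i : Fin N) :
    ∃ U : Submodule ℝ (Fin N → ℝ), finrank ℝ U = N - (i : ℕ) ∧
      ∀ x ∈ U, x ⬝ᵥ (S *ᵥ x) ≤ dEig hS i * (x ⬝ᵥ x) := by
  refine ⟨Vspan hS (Finset.Iic i.rev), ?_, fun x hx => Vspan_ray_le hS _ _
    (fun p hp => sEig_mono hS (Finset.mem_Iic.mp hp)) hx⟩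
  rw [finrank_Vspan, Fin.card_Iic, Fin.val_rev]
  omega

lemma exists_ne_zero_inf (V U : Submodule ℝ (Fin N → ℝ))
    (h : N < finrank ℝ V + finrank ℝ U) : ∃ x : Fin N → ℝ, x ≠ 0 ∧ x ∈ V ∧ x ∈ U := by
  have hsup : finrank ℝ (V ⊔ U : Submodule ℝ (Fin N → ℝ)) ≤ N := by
    have := Submodule.finrank_le (V ⊔ U : Submodule ℝ (Fin N → ℝ))
    simpa [Module.finrank_pi] using this
  have heq := Submodule.finrank_sup_add_finrank_inf_eq V U
  have hpos : 0 < finrank ℝ (V ⊓ U : Submodule ℝ (Fin N → ℝ)) := by omega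
  have hne : (V ⊓ U : Submodule ℝ (Fin N → ℝ)) ≠ ⊥ := by
    intro hbot
    rw [hbot, finrank_bot] at hpos
    exact lt_irrefl 0 hpos
  obtain ⟨x, hx, hx0⟩ := Submodule.exists_mem_ne_zero_of_ne_bot hne
  exact ⟨x, hx0, hx.1, hx.2⟩

/-- Courant-Fischer, upper bound half -/
lemma CFub (hS : S.IsHermitian) (i : Fin N) (U : Submodule ℝ (Fin N → ℝ)) (rho : ℝ)
    (hdim : finrank ℝ U = N - (i : ℕ))
    (hray : ∀ x ∈ U, x ⬝ᵥ (S *ᵥ x) ≤ rho * (x ⬝ᵥ x)) : dEig hS i ≤ rho := by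
  obtain ⟨T, hT, hTray⟩ := exists_top hS i
  obtain ⟨x, hx0, hxT, hxU⟩ := exists_ne_zero_inf T U (by rw [hT, hdim]; have := i.isLt; omega)
  have h1 := hTray x hxT
  have h2 := hray x hxU
  exact le_of_mul_le_mul_right (h1.trans h2) (dot_pos hx0)

/-- Courant-Fischer, lower bound half -/
lemma CFlb (hS : S.IsHermitian) (i : Fin N) (V : Submodule ℝ (Fin N → ℝ)) (rho : ℝ)
    (hdim : finrank ℝ V = (i : ℕ) + 1)
    (hray : ∀ x ∈ V, rho * (x ⬝ᵥ x) ≤ x ⬝ᵥ (S *ᵥ x)) : rho ≤ dEig hS i := by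
  obtain ⟨B, hB, hBray⟩ := exists_bot hS i
  obtain ⟨x, hx0, hxV, hxB⟩ := exists_ne_zero_inf V B (by rw [hB, hdim]; have := i.isLt; omega)
  have h1 := hray x hxV
  have h2 := hBray x hxB
  exact le_of_mul_le_mul_right (h1.trans h2) (dot_pos hx0)


lemma exists_eigvec (hS : S.IsHermitian) (i : Fin N) :
    ∃ v : Fin N → ℝ, v ⬝ᵥ v = 1 ∧ S *ᵥ v = dEig hS i • v :=
  ⟨wVec hS i.rev, by rw [wVec_dot]; simp, wVec_eig hS i.rev⟩

lemma dEig_AtA_nonneg {m n : ℕ} (A : Matrix (Fin m) (Fin n) ℝ) (i : Fin n) :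
    0 ≤ dEig (Matrix.isHermitian_conjTranspose_mul_self A) i := by
  obtain ⟨v, hv1, hv2⟩ := exists_eigvec (Matrix.isHermitian_conjTranspose_mul_self A) i
  have h : v ⬝ᵥ ((Aᴴ * A) *ᵥ v) = dEig (Matrix.isHermitian_conjTranspose_mul_self A) i := by
    rw [hv2, dotProduct_smul, hv1]
    simp
  rw [← h, dot_cmul]
  exact dot_nonneg _

lemma dEig_AtA_le_frob2 {m n : ℕ} (A : Matrix (Fin m) (Fin n) ℝ) (i : Fin n) :
    dEig (Matrix.isHermitian_conjTranspose_mul_self A) i ≤ frob2 A := by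
  obtain ⟨v, hv1, hv2⟩ := exists_eigvec (Matrix.isHermitian_conjTranspose_mul_self A) i
  have h : v ⬝ᵥ ((Aᴴ * A) *ᵥ v) = dEig (Matrix.isHermitian_conjTranspose_mul_self A) i := by
    rw [hv2, dotProduct_smul, hv1]; simp
  have h2 := mulVec_dot_le A v
  rw [← dot_cmul A v v, h, hv1, mul_one] at h2
  exact h2

lemma one_le_frob2_inv_mul_dEig {k : ℕ} (B : Matrix (Fin k) (Fin k) ℝ) (hB : IsUnit B.det)
    (i : Fin k) : 1 ≤ frob2 B⁻¹ * dEig (Matrix.isHermitian_conjTranspose_mul_self B) i := by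
  obtain ⟨v, hv1, hv2⟩ := exists_eigvec (Matrix.isHermitian_conjTranspose_mul_self B) i
  have hd : (B *ᵥ v) ⬝ᵥ (B *ᵥ v) = dEig (Matrix.isHermitian_conjTranspose_mul_self B) i := by
    rw [← dot_cmul B v v, hv2, dotProduct_smul, hv1]; simp
  have hBv : B⁻¹ *ᵥ (B *ᵥ v) = v := by
    rw [Matrix.mulVec_mulVec, Matrix.nonsing_inv_mul B hB, Matrix.one_mulVec]
  have h := mulVec_dot_le B⁻¹ (B *ᵥ v)
  rw [hBv, hv1, hd] at h
  exact h

lemma dEig_pos_of_unit {k : ℕ} (B : Matrix (Fin k) (Fin k) ℝ) (hB : IsUnit B.det)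
    (i : Fin k) : 0 < dEig (Matrix.isHermitian_conjTranspose_mul_self B) i := by
  have h := one_le_frob2_inv_mul_dEig B hB i
  by_contra hc
  push_neg at hc
  nlinarith [frob2_nonneg B⁻¹]

lemma finrank_map_inj {a b : ℕ} (f : (Fin a → ℝ) →ₗ[ℝ] (Fin b → ℝ))
    (hf : Function.Injective f) (p : Submodule ℝ (Fin a → ℝ)) :
    finrank ℝ (p.map f) = finrank ℝ p :=
  ((Submodule.equivMapOfInjective f hf p).finrank_eq).symm

lemma mulVecT_inj {P : Matrix (Fin N) (Fin N) ℝ} (hP : Pᵀ * P = 1) :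
    Function.Injective (Pᵀ.mulVecLin) := by
  intro x y hxy
  have hPPt : P * Pᵀ = 1 := mul_eq_one_comm.mp hP
  have : ∀ z : Fin N → ℝ, P *ᵥ (Pᵀ *ᵥ z) = z := by
    intro z; rw [Matrix.mulVec_mulVec, hPPt, Matrix.one_mulVec]
  calc x = P *ᵥ (Pᵀ *ᵥ x) := (this x).symm
    _ = P *ᵥ (Pᵀ *ᵥ y) := by rw [show Pᵀ *ᵥ x = Pᵀ *ᵥ y from hxy]
    _ = y := this y

lemma dEig_orth_le {P : Matrix (Fin N) (Fin N) ℝ} (hP : Pᵀ * P = 1)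
    (hS : S.IsHermitian) (hS' : (Pᵀ * S * P).IsHermitian) (i : Fin N) :
    dEig hS i ≤ dEig hS' i := by
  have hPPt : P * Pᵀ = 1 := mul_eq_one_comm.mp hP
  obtain ⟨V, hV, hVray⟩ := exists_top hS i
  have hdot : ∀ a b : Fin N → ℝ, (Pᵀ *ᵥ a) ⬝ᵥ (Pᵀ *ᵥ b) = a ⬝ᵥ b := by
    intro a b
    rw [← dot_tmul Pᵀ a b, Matrix.transpose_transpose, hPPt, Matrix.one_mulVec]
  apply CFlb hS' i (V.map Pᵀ.mulVecLin) _ (by rw [finrank_map_inj _ (mulVecT_inj hP), hV])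
  rintro x ⟨u, hu, rfl⟩
  have hity : (Pᵀ * S * P) *ᵥ (Pᵀ.mulVecLin u) = Pᵀ *ᵥ (S *ᵥ u) := by
    simp only [Matrix.mulVecLin_apply, Matrix.mulVec_mulVec]
    have hmm : Pᵀ * S * P * Pᵀ = Pᵀ * S := by
      rw [Matrix.mul_assoc (Pᵀ * S), hPPt, Matrix.mul_one]
    rw [hmm]
  rw [hity]
  simp only [Matrix.mulVecLin_apply]
  rw [hdot u (S *ᵥ u), hdot u u]
  exact hVray u hu

lemma dEig_congr {T : Matrix (Fin N) (Fin N) ℝ} (h : S = T) (hS : S.IsHermitian)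
    (hT : T.IsHermitian) (i : Fin N) : dEig hS i = dEig hT i := by
  subst h; rfl

lemma dEig_orth {P : Matrix (Fin N) (Fin N) ℝ} (hP : Pᵀ * P = 1)
    (hS : S.IsHermitian) (hS' : (Pᵀ * S * P).IsHermitian) (i : Fin N) :
    dEig hS i = dEig hS' i := by
  refine le_antisymm (dEig_orth_le hP hS hS' i) ?_
  have hPPt : P * Pᵀ = 1 := mul_eq_one_comm.mp hP
  have hPt : (Pᵀ)ᵀ * Pᵀ = 1 := by rw [Matrix.transpose_transpose, hPPt]
  have hback : (Pᵀ)ᵀ * (Pᵀ * S * P) * Pᵀ = S := by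
    rw [Matrix.transpose_transpose]
    calc P * (Pᵀ * S * P) * Pᵀ = (P * Pᵀ) * S * (P * Pᵀ) := by
          simp only [Matrix.mul_assoc]
      _ = S := by rw [hPPt]; simp
  have hS2 : ((Pᵀ)ᵀ * (Pᵀ * S * P) * Pᵀ).IsHermitian := by rw [hback]; exact hS
  have h2 := dEig_orth_le hPt hS' hS2 i
  rwa [dEig_congr hback hS2 hS i] at h2

section Cat

variable {p q : ℕ}

lemma cat_add (u u' : Fin p → ℝ) (v v' : Fin q → ℝ) :
    Fin.append (u + u') (v + v') = Fin.append u v + Fin.append u' v' := by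
  funext i
  refine Fin.addCases (fun j => ?_) (fun j => ?_) i <;>
    simp [Fin.append_left, Fin.append_right]

lemma cat_smul (c : ℝ) (u : Fin p → ℝ) (v : Fin q → ℝ) :
    Fin.append (c • u) (c • v) = c • Fin.append u v := by
  funext i
  refine Fin.addCases (fun j => ?_) (fun j => ?_) i <;>
    simp [Fin.append_left, Fin.append_right]

lemma cat_dot (u u' : Fin p → ℝ) (v v' : Fin q → ℝ) :
    Fin.append u v ⬝ᵥ Fin.append u' v' = u ⬝ᵥ u' + v ⬝ᵥ v' := by
  rw [dotProduct, Fin.sum_univ_add]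
  simp [Fin.append_left, Fin.append_right, dotProduct]

lemma cat_zero : (Fin.append (0 : Fin p → ℝ) (0 : Fin q → ℝ)) = 0 := by
  funext i
  refine Fin.addCases (fun j => ?_) (fun j => ?_) i <;>
    simp [Fin.append_left, Fin.append_right]

/-- `a ↦ (a, 0)` as a linear map -/
noncomputable def leftL (p q : ℕ) : (Fin p → ℝ) →ₗ[ℝ] (Fin (p + q) → ℝ) where
  toFun a := Fin.append a (0 : Fin q → ℝ)
  map_add' a a' := by rw [← cat_add]; simp
  map_smul' c a := by simp only [RingHom.id_apply]; rw [← cat_smul c a 0]; simp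

/-- `b ↦ (W₀ b, b)` as a linear map -/
noncomputable def rightL (W0 : Matrix (Fin p) (Fin q) ℝ) :
    (Fin q → ℝ) →ₗ[ℝ] (Fin (p + q) → ℝ) where
  toFun b := Fin.append (W0 *ᵥ b) b
  map_add' b b' := by rw [← cat_add]; simp [Matrix.mulVec_add]
  map_smul' c b := by simp only [RingHom.id_apply]; rw [← cat_smul c (W0 *ᵥ b) b]; simp [Matrix.mulVec_smul]

lemma leftL_apply (a : Fin p → ℝ) : leftL p q a = Fin.append a 0 := rfl

lemma rightL_apply (W0 : Matrix (Fin p) (Fin q) ℝ) (b : Fin q → ℝ) :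
    rightL W0 b = Fin.append (W0 *ᵥ b) b := rfl

lemma cat_fst (u : Fin p → ℝ) (v : Fin q → ℝ) (j : Fin p) :
    Fin.append u v (Fin.castAdd q j) = u j := Fin.append_left u v j

lemma cat_snd (u : Fin p → ℝ) (v : Fin q → ℝ) (j : Fin q) :
    Fin.append u v (Fin.natAdd p j) = v j := Fin.append_right u v j

lemma leftL_inj : Function.Injective (leftL p q) := by
  intro a a' h
  funext j
  have := congr_fun h (Fin.castAdd q j)
  simpa [leftL_apply, cat_fst] using this

lemma rightL_inj (W0 : Matrix (Fin p) (Fin q) ℝ) : Function.Injective (rightL W0) := by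
  intro b b' h
  funext j
  have := congr_fun h (Fin.natAdd p j)
  simpa [rightL_apply, cat_snd] using this

lemma left_right_inf (W0 : Matrix (Fin p) (Fin q) ℝ) (V1 : Submodule ℝ (Fin p → ℝ))
    (V2 : Submodule ℝ (Fin q → ℝ)) :
    (V1.map (leftL p q)) ⊓ (V2.map (rightL W0)) = ⊥ := by
  rw [eq_bot_iff]
  rintro x ⟨⟨a, _, rfl⟩, ⟨b, _, hb⟩⟩
  have hb2 : b = 0 := by
    funext j
    have := congr_fun hb (Fin.natAdd p j)
    simpa [rightL_apply, leftL_apply, cat_snd] using this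
  rw [← hb, hb2]
  simp only [Submodule.mem_bot, rightL_apply, Matrix.mulVec_zero, cat_zero]

lemma finrank_sup_map (W0 : Matrix (Fin p) (Fin q) ℝ) (V1 : Submodule ℝ (Fin p → ℝ))
    (V2 : Submodule ℝ (Fin q → ℝ)) :
    Module.finrank ℝ ((V1.map (leftL p q)) ⊔ (V2.map (rightL W0)) : Submodule ℝ (Fin (p+q) → ℝ)) =
      Module.finrank ℝ V1 + Module.finrank ℝ V2 := by
  have h := Submodule.finrank_sup_add_finrank_inf_eq (V1.map (leftL p q)) (V2.map (rightL W0))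
  rw [left_right_inf, finrank_bot, add_zero] at h
  rw [h, finrank_map_inj _ leftL_inj, finrank_map_inj _ (rightL_inj W0)]

lemma mem_sup_map (W0 : Matrix (Fin p) (Fin q) ℝ) (V1 : Submodule ℝ (Fin p → ℝ))
    (V2 : Submodule ℝ (Fin q → ℝ)) (x : Fin (p+q) → ℝ)
    (hx : x ∈ (V1.map (leftL p q)) ⊔ (V2.map (rightL W0))) :
    ∃ a b, a ∈ V1 ∧ b ∈ V2 ∧ x = Fin.append (a + W0 *ᵥ b) b := by
  rw [Submodule.mem_sup] at hx
  obtain ⟨y, hy, z, hz, rfl⟩ := hx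
  obtain ⟨a, ha, rfl⟩ := hy
  obtain ⟨b, hb, rfl⟩ := hz
  refine ⟨a, b, ha, hb, ?_⟩
  rw [leftL_apply, rightL_apply, ← cat_add]
  simp [add_comm]

end Cat


lemma sq_am_gm {u v t : ℝ} (hu : 0 ≤ u) (hv : 0 ≤ v) (ht : t^2 ≤ u*v) :
    2*t ≤ u + v := by
  rcases le_or_gt (2*t) 0 with h | h
  · nlinarith
  · by_contra hcon
    push_neg at hcon
    have h2 : (u+v)*(u+v) < (2*t)*(2*t) := mul_self_lt_mul_self (by linarith) hcon
    nlinarith [sq_nonneg (u - v)]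

lemma scalarA {C mu F I s2 A2 B2 Y2 P2 t : ℝ}
    (hA2 : A2 = Y2 + 2*t + P2) (ht : t^2 ≤ Y2 * P2) (hP2 : P2 ≤ s2 * B2)
    (hC : s2 + I*F ≤ C) (hIm : 1 ≤ I*mu) (hmu : 0 < mu)
    (hY2 : 0 ≤ Y2) (hB2 : 0 ≤ B2) (hP2' : 0 ≤ P2) (hF : 0 ≤ F) (hs2 : 0 ≤ s2) (hI : 0 ≤ I) :
    mu*A2 + F*B2 ≤ (1+C)*mu*(Y2+B2) := by
  have ht2 : t^2 ≤ (s2*Y2) * B2 := by nlinarith [mul_le_mul_of_nonneg_left hP2 hY2]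
  have h1 : 2*t ≤ s2*Y2 + B2 := sq_am_gm (mul_nonneg hs2 hY2) hB2 ht2
  have hC' : s2 ≤ C := by nlinarith
  nlinarith [mul_le_mul_of_nonneg_left h1 hmu.le, mul_nonneg (mul_nonneg hI hF) hB2,
    mul_le_mul_of_nonneg_left hP2 hmu.le, mul_nonneg hmu.le hB2,
    mul_le_mul_of_nonneg_right hC' (mul_nonneg hmu.le hY2),
    mul_le_mul_of_nonneg_right hIm (mul_nonneg hF hB2),
    mul_le_mul_of_nonneg_right hC (mul_nonneg hmu.le hB2)]

lemma scalarB_keyAD {C sig2 I nu g p2 b2 : ℝ}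
    (hp2 : p2 + I*g ≤ C*b2) (hg : nu*b2 ≤ g) (hnu : nu ≤ C*sig2) (hIs : 1 ≤ I*sig2)
    (hnu0 : 0 ≤ nu) (hg0 : 0 ≤ g) (hI : 0 ≤ I) (hsig : 0 < sig2) (hC : 0 ≤ C)
    (hb2 : 0 ≤ b2) (hp20 : 0 ≤ p2) :
    nu^2 * p2 ≤ ((1+C)*sig2 - nu) * ((1+C)*g - nu*(p2+b2)) := by
  have hApos : 0 < (1+C)*sig2 - nu := by nlinarith
  have hD1 : (1+C)*(g - nu*b2) + nu*I*g ≤ (1+C)*g - nu*(p2+b2) := by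
    nlinarith [mul_le_mul_of_nonneg_left (by linarith : p2 ≤ C*b2 - I*g) hnu0]
  have hAD1 := mul_le_mul_of_nonneg_left hD1 hApos.le
  have hAG : 0 ≤ ((1+C)*sig2 - nu)*((1+C)*(g - nu*b2)) :=
    mul_nonneg hApos.le (mul_nonneg (by linarith) (by nlinarith))
  have h1 : nu^2*p2 ≤ nu*C*g - nu^2*I*g := by
    have ha := mul_le_mul_of_nonneg_left (by linarith : p2 ≤ C*b2 - I*g)
      (by positivity : 0 ≤ nu^2)
    have hb := mul_le_mul_of_nonneg_left hg (mul_nonneg hnu0 hC)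
    nlinarith
  have h3 : nu*C*g ≤ (1+C)*sig2*nu*I*g := by
    have ha : nu*g*C ≤ nu*g*(1+C) := by nlinarith [mul_nonneg hnu0 hg0]
    have hb := mul_le_mul_of_nonneg_left hIs
      (by positivity : (0:ℝ) ≤ nu*g*(1+C))
    nlinarith
  nlinarith [hAD1, hAG]

lemma scalarB {C sig2 I nu g p2 b2 a2 t : ℝ}
    (hp2 : p2 + I*g ≤ C*b2) (hg : nu*b2 ≤ g) (hnu : nu ≤ C*sig2) (hIs : 1 ≤ I*sig2)
    (ht : t^2 ≤ a2*p2)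
    (hnu0 : 0 ≤ nu) (hg0 : 0 ≤ g) (hI : 0 ≤ I) (hsig : 0 < sig2) (hC : 0 ≤ C)
    (hb2 : 0 ≤ b2) (hp20 : 0 ≤ p2) (ha2 : 0 ≤ a2) :
    nu * (a2 - 2*t + p2 + b2) ≤ (1+C)*(sig2*a2 + g) := by
  have hAD := scalarB_keyAD hp2 hg hnu hIs hnu0 hg0 hI hsig hC hb2 hp20
  have hal2 : (Real.sqrt a2)^2 = a2 := Real.sq_sqrt ha2
  have hpp2 : (Real.sqrt p2)^2 = p2 := Real.sq_sqrt hp20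
  have halpp : -t ≤ Real.sqrt a2 * Real.sqrt p2 := by
    have h1 : -t ≤ |t| := neg_le_abs t
    have h2 : |t| = Real.sqrt (t^2) := (Real.sqrt_sq_eq_abs t).symm
    have h3 : Real.sqrt (t^2) ≤ Real.sqrt (a2*p2) := Real.sqrt_le_sqrt ht
    have h4 : Real.sqrt (a2*p2) = Real.sqrt a2 * Real.sqrt p2 := Real.sqrt_mul ha2 p2
    linarith
  have hApos : 0 < (1+C)*sig2 - nu := by nlinarith
  have hal0 : 0 ≤ Real.sqrt a2 := Real.sqrt_nonneg _
  have hpp0 : 0 ≤ Real.sqrt p2 := Real.sqrt_nonneg _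
  nlinarith [sq_nonneg (((1+C)*sig2 - nu)*Real.sqrt a2 - nu*Real.sqrt p2),
    mul_le_mul_of_nonneg_left halpp (by linarith : (0:ℝ) ≤ 2*nu),
    mul_pos hApos hApos]

lemma dot_expand (u v : Fin p → ℝ) :
    (u + v) ⬝ᵥ (u + v) = u ⬝ᵥ u + 2*(u ⬝ᵥ v) + v ⬝ᵥ v := by
  rw [add_dotProduct, dotProduct_add, dotProduct_add]
  rw [dotProduct_comm v u]
  ring

lemma dot_sq_le (u v : Fin p → ℝ) : (u ⬝ᵥ v)^2 ≤ (u ⬝ᵥ u)*(v ⬝ᵥ v) := by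
  have h := Finset.sum_mul_sq_le_sq_mul_sq Finset.univ u v
  simpa [dotProduct, sq] using h

section Blocks

variable {k m' n' : ℕ} (R11 : Matrix (Fin k) (Fin k) ℝ) (R12 : Matrix (Fin k) (Fin n') ℝ)
  (R22 : Matrix (Fin m') (Fin n') ℝ)

lemma append_comp_equiv {p q : ℕ} (u : Fin p → ℝ) (v : Fin q → ℝ) :
    Fin.append u v ∘ ⇑(finSumFinEquiv (m := p) (n := q)) = Sum.elim u v := by
  funext x
  cases x with
  | inl i => simp [finSumFinEquiv_apply_left, Fin.append_left]
  | inr i => simp [finSumFinEquiv_apply_right, Fin.append_right]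

lemma elim_comp_symm {p q : ℕ} (u : Fin p → ℝ) (v : Fin q → ℝ) :
    Sum.elim u v ∘ ⇑(finSumFinEquiv (m := p) (n := q)).symm = Fin.append u v := by
  funext r
  obtain ⟨x, rfl⟩ := (finSumFinEquiv (m := p) (n := q)).surjective r
  rw [Function.comp_apply, Equiv.symm_apply_apply]
  cases x with
  | inl i => simp [finSumFinEquiv_apply_left, Fin.append_left]
  | inr i => simp [finSumFinEquiv_apply_right, Fin.append_right]

/-- the `(k+m') × (k+n')` matrix `[[R11, R12], [0, R22]]` -/
noncomputable def RF : Matrix (Fin (k + m')) (Fin (k + n')) ℝ :=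
  Matrix.reindex finSumFinEquiv finSumFinEquiv (Matrix.fromBlocks R11 R12 0 R22)

lemma RF_mulVec (a : Fin k → ℝ) (b : Fin n' → ℝ) :
    (RF R11 R12 R22) *ᵥ Fin.append a b = Fin.append (R11 *ᵥ a + R12 *ᵥ b) (R22 *ᵥ b) := by
  rw [RF, Matrix.reindex_apply, Matrix.submatrix_mulVec_equiv]
  rw [Equiv.symm_symm, append_comp_equiv, Matrix.fromBlocks_mulVec]
  simp only [Sum.elim_comp_inl, Sum.elim_comp_inr, Matrix.zero_mulVec, zero_add]
  exact elim_comp_symm _ _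

/-- squared-eigenvalue function: `dSq A i = σ_i(A)²` (descending) -/
noncomputable def dSq {p q : ℕ} (A : Matrix (Fin p) (Fin q) ℝ) (i : Fin q) : ℝ :=
  dEig (Matrix.isHermitian_conjTranspose_mul_self A) i

lemma dSq_nonneg {p q : ℕ} (A : Matrix (Fin p) (Fin q) ℝ) (i : Fin q) : 0 ≤ dSq A i :=
  dEig_AtA_nonneg A i

lemma RF_ray (a : Fin k → ℝ) (b : Fin n' → ℝ) :
    (Fin.append a b) ⬝ᵥ (((RF R11 R12 R22)ᴴ * RF R11 R12 R22) *ᵥ Fin.append a b) =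
      ((R11 *ᵥ a + R12 *ᵥ b) ⬝ᵥ (R11 *ᵥ a + R12 *ᵥ b)) + ((R22 *ᵥ b) ⬝ᵥ (R22 *ᵥ b)) := by
  rw [dot_cmul, RF_mulVec, cat_dot]

lemma ray_ge_min {p : ℕ} (B : Matrix (Fin p) (Fin p) ℝ) (hp : 0 < p) (y : Fin p → ℝ) :
    dSq B ⟨p-1, by omega⟩ * (y ⬝ᵥ y) ≤ (B *ᵥ y) ⬝ᵥ (B *ᵥ y) := by
  obtain ⟨V, hVd, hVray⟩ :=
    exists_top (Matrix.isHermitian_conjTranspose_mul_self B) ⟨p-1, by omega⟩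
  have hVtop : V = ⊤ := Submodule.eq_top_of_finrank_eq (by
    rw [hVd]
    simp only [Module.finrank_pi, Fintype.card_fin]
    omega)
  rw [← dot_cmul]
  exact hVray y (by rw [hVtop]; trivial)

/-- Goal 1 : σ_i(R11)² ≤ σ_i(R)² -/
lemma goal1 (i : Fin k) :
    dSq R11 i ≤ dSq (RF R11 R12 R22) (Fin.castAdd n' i) := by
  obtain ⟨V, hVd, hVray⟩ := exists_top (Matrix.isHermitian_conjTranspose_mul_self R11) i
  apply CFlb _ _ (V.map (leftL k n'))
  · rw [finrank_map_inj _ leftL_inj, hVd, Fin.coe_castAdd]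
  · rintro x ⟨a, ha, rfl⟩
    rw [leftL_apply, RF_ray, cat_dot]
    simp only [Matrix.mulVec_zero, add_zero, dotProduct_zero]
    rw [← dot_cmul R11 a a]
    exact hVray a ha

/-- Goal 3 : σ_{k+j}(R)² ≤ σ_j(R22)² -/
lemma goal3 (hR11 : IsUnit R11.det) (j : Fin n') :
    dSq (RF R11 R12 R22) (Fin.natAdd k j) ≤ dSq R22 j := by
  obtain ⟨U, hUd, hUray⟩ := exists_bot (Matrix.isHermitian_conjTranspose_mul_self R22) j
  apply CFub _ _ (U.map (rightL (-(R11⁻¹ * R12))))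
  · rw [finrank_map_inj _ (rightL_inj _), hUd, Fin.coe_natAdd]
    omega
  · rintro x ⟨b, hb, rfl⟩
    rw [rightL_apply, RF_ray, cat_dot]
    have hcanc : R11 *ᵥ ((-(R11⁻¹ * R12)) *ᵥ b) + R12 *ᵥ b = 0 := by
      rw [Matrix.neg_mulVec, Matrix.mulVec_neg, Matrix.mulVec_mulVec,
        Matrix.mul_nonsing_inv_cancel_left _ _ hR11, neg_add_cancel]
    rw [hcanc]
    simp only [zero_dotProduct, zero_add]
    have h1 : (R22 *ᵥ b) ⬝ᵥ (R22 *ᵥ b) ≤ dSq R22 j * (b ⬝ᵥ b) := by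
      rw [← dot_cmul R22 b b]
      exact hUray b hb
    have h2 : dSq R22 j * (b ⬝ᵥ b) ≤
        dSq R22 j * ((-(R11⁻¹ * R12) *ᵥ b) ⬝ᵥ (-(R11⁻¹ * R12) *ᵥ b) + b ⬝ᵥ b) :=
      mul_le_mul_of_nonneg_left (by linarith [dot_nonneg (-(R11⁻¹ * R12) *ᵥ b)])
        (dSq_nonneg R22 j)
    linarith

/-- Goal 2 : σ_i(R)² ≤ (1+C) σ_i(R11)² -/
lemma goal2 (hR11 : IsUnit R11.det) (i : Fin k) (C : ℝ)
    (hC : frob2 (R11⁻¹ * R12) + frob2 R11⁻¹ * frob2 R22 ≤ C) :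
    dSq (RF R11 R12 R22) (Fin.castAdd n' i) ≤ (1 + C) * dSq R11 i := by
  obtain ⟨U, hUd, hUray⟩ := exists_bot (Matrix.isHermitian_conjTranspose_mul_self R11) i
  apply CFub _ _ ((U.map (leftL k n')) ⊔
    ((⊤ : Submodule ℝ (Fin n' → ℝ)).map (rightL (-(R11⁻¹ * R12)))))
  · rw [finrank_sup_map, hUd, finrank_top, Module.finrank_pi, Fintype.card_fin,
      Fin.coe_castAdd]
    have := i.isLt
    omega
  · intro x hx
    obtain ⟨a, b, ha, -, rfl⟩ := mem_sup_map _ _ _ _ hx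
    -- x = append (a + (-W) *ᵥ b) b ; set y := a + (-W)*ᵥ b, w := W *ᵥ b, so a = y + w
    set W := R11⁻¹ * R12 with hW
    set w := W *ᵥ b with hw
    set y := a + (-W) *ᵥ b with hy
    have hyw : a = y + w := by
      rw [hy, hw, Matrix.neg_mulVec]
      abel
    have hR11y : R11 *ᵥ y + R12 *ᵥ b = R11 *ᵥ a := by
      rw [hy, Matrix.mulVec_add, Matrix.neg_mulVec, Matrix.mulVec_neg,
        Matrix.mulVec_mulVec, Matrix.mul_nonsing_inv_cancel_left _ _ hR11]
      abel
    rw [RF_ray, hR11y, cat_dot]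
    have h11 : (R11 *ᵥ a) ⬝ᵥ (R11 *ᵥ a) ≤ dSq R11 i * (a ⬝ᵥ a) := by
      rw [← dot_cmul R11 a a]; exact hUray a ha
    have h22 : (R22 *ᵥ b) ⬝ᵥ (R22 *ᵥ b) ≤ frob2 R22 * (b ⬝ᵥ b) := mulVec_dot_le R22 b
    have hkey : dSq R11 i * (a ⬝ᵥ a) + frob2 R22 * (b ⬝ᵥ b) ≤
        (1 + C) * dSq R11 i * (y ⬝ᵥ y + b ⬝ᵥ b) := by
      apply scalarA (t := y ⬝ᵥ w) (P2 := w ⬝ᵥ w) (s2 := frob2 W) (I := frob2 R11⁻¹)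
      · rw [hyw, dot_expand]
      · exact dot_sq_le y w
      · rw [hw]; exact mulVec_dot_le W b
      · exact hC
      · exact one_le_frob2_inv_mul_dEig R11 hR11 i
      · exact dEig_pos_of_unit R11 hR11 i
      · exact dot_nonneg y
      · exact dot_nonneg b
      · exact dot_nonneg w
      · exact frob2_nonneg R22
      · exact frob2_nonneg W
      · exact frob2_nonneg R11⁻¹
    calc (R11 *ᵥ a) ⬝ᵥ (R11 *ᵥ a) + (R22 *ᵥ b) ⬝ᵥ (R22 *ᵥ b)
        ≤ dSq R11 i * (a ⬝ᵥ a) + frob2 R22 * (b ⬝ᵥ b) := by linarith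
      _ ≤ (1 + C) * dSq R11 i * (y ⬝ᵥ y + b ⬝ᵥ b) := hkey

/-- Goal 4 : σ_j(R22)² ≤ (1+C) σ_{k+j}(R)² -/
lemma goal4 (hR11 : IsUnit R11.det) (hk : 0 < k) (j : Fin n') (C : ℝ)
    (hC : frob2 (R11⁻¹ * R12) + frob2 R11⁻¹ * frob2 R22 ≤ C) :
    dSq R22 j ≤ (1 + C) * dSq (RF R11 R12 R22) (Fin.natAdd k j) := by
  have hC0 : 0 ≤ C := le_trans (add_nonneg (frob2_nonneg _)
    (mul_nonneg (frob2_nonneg _) (frob2_nonneg _))) hC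
  have hpos : (0:ℝ) < 1 + C := by linarith
  set W := R11⁻¹ * R12 with hW
  set nu := dSq R22 j with hnu
  set sig2 := dSq R11 ⟨k-1, by omega⟩ with hsig2
  have hsigpos : 0 < sig2 := dEig_pos_of_unit R11 hR11 _
  have hIs : 1 ≤ frob2 R11⁻¹ * sig2 := one_le_frob2_inv_mul_dEig R11 hR11 _
  have hnuC : nu ≤ C * sig2 := by
    have h1 : nu ≤ frob2 R22 := dEig_AtA_le_frob2 R22 j
    have h2 : frob2 R11⁻¹ * frob2 R22 ≤ C := by
      have := frob2_nonneg W
      linarith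
    nlinarith [frob2_nonneg R22, frob2_nonneg R11⁻¹, hsigpos.le]
  obtain ⟨V, hVd, hVray⟩ := exists_top (Matrix.isHermitian_conjTranspose_mul_self R22) j
  have hstep : nu / (1 + C) ≤ dSq (RF R11 R12 R22) (Fin.natAdd k j) := by
    apply CFlb _ _ (((⊤ : Submodule ℝ (Fin k → ℝ)).map (leftL k n')) ⊔ (V.map (rightL 0)))
    · rw [finrank_sup_map, hVd, finrank_top, Module.finrank_pi, Fintype.card_fin,
        Fin.coe_natAdd]
      omega
    · intro x hx
      obtain ⟨a, b, -, hb, rfl⟩ := mem_sup_map _ _ _ _ hx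
      rw [show (0 : Matrix (Fin k) (Fin n') ℝ) *ᵥ b = 0 from Matrix.zero_mulVec b, add_zero]
      set w := W *ᵥ b with hw
      set y := a + w with hy
      have hR11y : R11 *ᵥ a + R12 *ᵥ b = R11 *ᵥ y := by
        rw [hy, Matrix.mulVec_add, hw, Matrix.mulVec_mulVec,
          Matrix.mul_nonsing_inv_cancel_left _ _ hR11]
      rw [RF_ray, hR11y, cat_dot]
      have hray : sig2 * (y ⬝ᵥ y) ≤ (R11 *ᵥ y) ⬝ᵥ (R11 *ᵥ y) := ray_ge_min R11 hk y
      have hg : nu * (b ⬝ᵥ b) ≤ (R22 *ᵥ b) ⬝ᵥ (R22 *ᵥ b) := by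
        rw [← dot_cmul R22 b b]; exact hVray b hb
      have hp2 : (w ⬝ᵥ w) + frob2 R11⁻¹ * ((R22 *ᵥ b) ⬝ᵥ (R22 *ᵥ b)) ≤ C * (b ⬝ᵥ b) := by
        have h1 : w ⬝ᵥ w ≤ frob2 W * (b ⬝ᵥ b) := by rw [hw]; exact mulVec_dot_le W b
        have h2 : (R22 *ᵥ b) ⬝ᵥ (R22 *ᵥ b) ≤ frob2 R22 * (b ⬝ᵥ b) := mulVec_dot_le R22 b
        have h3 := mul_le_mul_of_nonneg_left h2 (frob2_nonneg R11⁻¹)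
        nlinarith [mul_le_mul_of_nonneg_right hC (dot_nonneg b)]
      have haa : a ⬝ᵥ a = y ⬝ᵥ y - 2*(y ⬝ᵥ w) + w ⬝ᵥ w := by
        have : a = y + (-w) := by rw [hy]; abel
        rw [this, dot_expand]
        simp only [dotProduct_neg, neg_dotProduct, neg_neg]
        ring
      have hsc := scalarB (C := C) (sig2 := sig2) (I := frob2 R11⁻¹) (nu := nu)
        (g := (R22 *ᵥ b) ⬝ᵥ (R22 *ᵥ b)) (p2 := w ⬝ᵥ w) (b2 := b ⬝ᵥ b) (a2 := y ⬝ᵥ y)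
        (t := y ⬝ᵥ w) hp2 hg hnuC hIs (dot_sq_le y w) (dSq_nonneg R22 j) (dot_nonneg _)
        (frob2_nonneg R11⁻¹) hsigpos hC0 (dot_nonneg b) (dot_nonneg w) (dot_nonneg y)
      rw [div_mul_eq_mul_div, div_le_iff₀ hpos]
      calc nu * (a ⬝ᵥ a + b ⬝ᵥ b) = nu * (y ⬝ᵥ y - 2*(y ⬝ᵥ w) + w ⬝ᵥ w + b ⬝ᵥ b) := by
            rw [haa]
        _ ≤ (1+C) * (sig2 * (y ⬝ᵥ y) + (R22 *ᵥ b) ⬝ᵥ (R22 *ᵥ b)) := hsc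
        _ ≤ ((R11 *ᵥ y) ⬝ᵥ (R11 *ᵥ y) + (R22 *ᵥ b) ⬝ᵥ (R22 *ᵥ b)) * (1+C) := by
            rw [mul_comm ((R11 *ᵥ y) ⬝ᵥ (R11 *ᵥ y) + (R22 *ᵥ b) ⬝ᵥ (R22 *ᵥ b)) (1+C)]
            apply mul_le_mul_of_nonneg_left _ hpos.le
            linarith
  rw [div_le_iff₀ hpos] at hstep
  linarith [hstep]

end Blocks


lemma permMatrix_orth {p : ℕ} (sigma : Equiv.Perm (Fin p)) :
    (sigma.permMatrix ℝ)ᵀ * sigma.permMatrix ℝ = 1 := by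
  show (sigma.toPEquiv.toMatrix)ᵀ * sigma.toPEquiv.toMatrix = 1
  rw [← PEquiv.toMatrix_symm, ← Equiv.toPEquiv_symm, ← PEquiv.toMatrix_trans,
    ← Equiv.toPEquiv_trans]
  simp

lemma dSq_M_eq {k m' n' : ℕ} (M : Matrix (Fin (k + m')) (Fin (k + n')) ℝ)
    (Pi : Matrix (Fin (k + n')) (Fin (k + n')) ℝ) (hPi : IsPermMatrix Pi)
    (Q : Matrix (Fin (k + m')) (Fin (k + m')) ℝ) (hQ : Qᵀ * Q = 1)
    (R11 : Matrix (Fin k) (Fin k) ℝ) (R12 : Matrix (Fin k) (Fin n') ℝ)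
    (R22 : Matrix (Fin m') (Fin n') ℝ)
    (hA : M * Pi = Q * RF R11 R12 R22) (idx : Fin (k + n')) :
    dSq M idx = dSq (RF R11 R12 R22) idx := by
  obtain ⟨sigma, rfl⟩ := hPi
  have hPt : (sigma.permMatrix ℝ)ᵀ * sigma.permMatrix ℝ = 1 := permMatrix_orth sigma
  set Pi := sigma.permMatrix ℝ
  have h1 : (M * Pi)ᴴ * (M * Pi) = Piᵀ * (Mᴴ * M) * Pi := by
    rw [Matrix.conjTranspose_mul, Matrix.conjTranspose_eq_transpose_of_trivial Pi]
    simp only [Matrix.mul_assoc]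
  have h2 : (M * Pi)ᴴ * (M * Pi) = (RF R11 R12 R22)ᴴ * (RF R11 R12 R22) := by
    rw [hA, Matrix.conjTranspose_mul, Matrix.conjTranspose_eq_transpose_of_trivial Q]
    calc (RF R11 R12 R22)ᴴ * Qᵀ * (Q * RF R11 R12 R22)
        = (RF R11 R12 R22)ᴴ * ((Qᵀ * Q) * RF R11 R12 R22) := by
          simp only [Matrix.mul_assoc]
      _ = _ := by rw [hQ, Matrix.one_mul]
  have hHerm : (Piᵀ * (Mᴴ * M) * Pi).IsHermitian := by
    rw [← h1]; exact Matrix.isHermitian_conjTranspose_mul_self (M * Pi)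
  calc dSq M idx = dEig hHerm idx :=
        dEig_orth hPt (Matrix.isHermitian_conjTranspose_mul_self M) hHerm idx
    _ = dEig (Matrix.isHermitian_conjTranspose_mul_self (M * Pi)) idx :=
        (dEig_congr h1 (Matrix.isHermitian_conjTranspose_mul_self (M * Pi)) hHerm idx).symm
    _ = dSq (RF R11 R12 R22) idx :=
        dEig_congr h2 (Matrix.isHermitian_conjTranspose_mul_self (M * Pi))
          (Matrix.isHermitian_conjTranspose_mul_self (RF R11 R12 R22)) idx

lemma sv_eq_sqrt_dSq {p q : ℕ} (A : Matrix (Fin p) (Fin q) ℝ) (idx : Fin q) :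
    singularValues A idx = Real.sqrt (dSq A idx) := rfl

lemma norm2_sq {p : ℕ} (x : Fin p → ℝ) : (norm2 x)^2 = x ⬝ᵥ x :=
  Real.sq_sqrt (dot_nonneg x)

/-- the main statement, in namespace form -/
theorem main {k m' n' : ℕ} (hmn : n' ≤ m')
    (M : Matrix (Fin (k + m')) (Fin (k + n')) ℝ)
    (Pi : Matrix (Fin (k + n')) (Fin (k + n')) ℝ) (hPi : IsPermMatrix Pi)
    (Q : Matrix (Fin (k + m')) (Fin (k + m')) ℝ)
    (R11 : Matrix (Fin k) (Fin k) ℝ) (R12 : Matrix (Fin k) (Fin n') ℝ)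
    (R22 : Matrix (Fin m') (Fin n') ℝ)
    (hQR : PartialQR (M * Pi) Q R11 R12 R22) (hR11 : IsUnit R11.det)
    (f : ℝ) (hf : 1 ≤ f) (hrho : rho R11 R12 R22 ≤ f) :
    ∀ (i : Fin k) (j : Fin n'), singularValues M (Fin.natAdd k j) ≠ 0 →
      (1 ≤ singularValues M (Fin.castAdd n' i) / singularValues R11 i ∧
        singularValues M (Fin.castAdd n' i) / singularValues R11 i ≤
          Real.sqrt (1 + f ^ 2 * k * n')) ∧
      (1 ≤ singularValues R22 j / singularValues M (Fin.natAdd k j) ∧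
        singularValues R22 j / singularValues M (Fin.natAdd k j) ≤
          Real.sqrt (1 + f ^ 2 * k * n')) ∧
      |(R11⁻¹ * R12) i j| ≤ f := by
  intro i j hj
  obtain ⟨hQ1, -, hQR3⟩ := hQR
  have hk : 0 < k := i.pos
  have hf0 : (0:ℝ) ≤ f := le_trans zero_le_one hf
  -- entrywise bound from rho
  have hentry : ∀ (i' : Fin k) (j' : Fin n'),
      ((R11⁻¹ * R12) i' j')^2 + (omega_ R11 i')^2 * (gamma_ R22 j')^2 ≤ f^2 := by
    intro i' j'
    have harg : 0 ≤ ((R11⁻¹ * R12) i' j')^2 + (omega_ R11 i')^2 * (gamma_ R22 j')^2 := by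
      positivity
    have h1 : Real.sqrt (((R11⁻¹ * R12) i' j')^2 + (omega_ R11 i')^2 * (gamma_ R22 j')^2)
        ≤ f := by
      refine le_trans ?_ hrho
      rw [rho]
      refine le_trans (le_ciSup (f := fun j'' => Real.sqrt (((R11⁻¹ * R12) i' j'')^2 +
        (omega_ R11 i')^2 * (gamma_ R22 j'')^2)) (Set.Finite.bddAbove (Set.finite_range _)) j')
        (le_ciSup (f := fun i'' => ⨆ j'', Real.sqrt (((R11⁻¹ * R12) i'' j'')^2 +
        (omega_ R11 i'')^2 * (gamma_ R22 j'')^2)) (Set.Finite.bddAbove (Set.finite_range _)) i')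
    calc ((R11⁻¹ * R12) i' j')^2 + (omega_ R11 i')^2 * (gamma_ R22 j')^2
        = (Real.sqrt (((R11⁻¹ * R12) i' j')^2 + (omega_ R11 i')^2 * (gamma_ R22 j')^2))^2 :=
          (Real.sq_sqrt harg).symm
      _ ≤ f^2 := pow_le_pow_left₀ (Real.sqrt_nonneg _) h1 2
  -- Frobenius bound
  have homega : ∀ i', (omega_ R11 i')^2 = ∑ l, (R11⁻¹ i' l)^2 := by
    intro i'
    rw [omega_, norm2_sq]
    simp [dotProduct, sq]
  have hgamma : ∀ j', (gamma_ R22 j')^2 = ∑ l, (R22 l j')^2 := by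
    intro j'
    rw [gamma_, norm2_sq]
    simp [dotProduct, sq]
  have hCb : frob2 (R11⁻¹ * R12) + frob2 R11⁻¹ * frob2 R22 ≤ f^2 * k * n' := by
    have h1 : frob2 R11⁻¹ = ∑ i', (omega_ R11 i')^2 := by
      rw [frob2]
      exact Finset.sum_congr rfl fun i' _ => (homega i').symm
    have h2 : frob2 R22 = ∑ j', (gamma_ R22 j')^2 := by
      rw [frob2, Finset.sum_comm]
      exact Finset.sum_congr rfl fun j' _ => (hgamma j').symm
    rw [h1, h2, Finset.sum_mul_sum, frob2, ← Finset.sum_add_distrib]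
    have h3 : ∀ i' ∈ Finset.univ, (∑ j', ((R11⁻¹ * R12) i' j')^2 +
        ∑ j', (omega_ R11 i')^2 * (gamma_ R22 j')^2) ≤ ∑ j' : Fin n', f^2 := by
      intro i' _
      rw [← Finset.sum_add_distrib]
      exact Finset.sum_le_sum fun j' _ => hentry i' j'
    refine le_trans (Finset.sum_le_sum h3) ?_
    simp only [Finset.sum_const, Finset.card_univ, Fintype.card_fin, nsmul_eq_mul]
    ring_nf
    exact le_refl _
  -- transfer of singular values
  have hA : M * Pi = Q * RF R11 R12 R22 := hQR3
  have hdM : ∀ idx, dSq M idx = dSq (RF R11 R12 R22) idx :=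
    dSq_M_eq M Pi hPi Q hQ1 R11 R12 R22 hA
  set C := f^2 * (k:ℝ) * (n':ℝ) with hCdef
  have hC0 : 0 ≤ C := by positivity
  have h1C : (0:ℝ) < 1 + C := by linarith
  have hg1 := goal1 R11 R12 R22 i
  have hg2 := goal2 R11 R12 R22 hR11 i C hCb
  have hg3 := goal3 R11 R12 R22 hR11 j
  have hg4 := goal4 R11 R12 R22 hR11 hk j C hCb
  have h11pos : 0 < dSq R11 i := dEig_pos_of_unit R11 hR11 i
  have hMj0 : 0 ≤ dSq M (Fin.natAdd k j) := dEig_AtA_nonneg M _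
  have hMjpos : 0 < dSq M (Fin.natAdd k j) := by
    rcases lt_or_eq_of_le hMj0 with h | h
    · exact h
    · exfalso
      apply hj
      rw [sv_eq_sqrt_dSq, ← h, Real.sqrt_zero]
  have hMipos : 0 < dSq M (Fin.castAdd n' i) := by
    rw [hdM]
    exact lt_of_lt_of_le h11pos hg1
  refine ⟨⟨?_, ?_⟩, ⟨?_, ?_⟩, ?_⟩
  · rw [sv_eq_sqrt_dSq, sv_eq_sqrt_dSq, one_le_div (Real.sqrt_pos.mpr h11pos)]
    apply Real.sqrt_le_sqrt
    rw [hdM]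
    exact hg1
  · rw [sv_eq_sqrt_dSq, sv_eq_sqrt_dSq, div_le_iff₀ (Real.sqrt_pos.mpr h11pos)]
    rw [← Real.sqrt_mul (by linarith : (0:ℝ) ≤ 1 + C)]
    apply Real.sqrt_le_sqrt
    rw [hdM]
    exact hg2
  · rw [sv_eq_sqrt_dSq, sv_eq_sqrt_dSq, one_le_div (Real.sqrt_pos.mpr hMjpos)]
    apply Real.sqrt_le_sqrt
    rw [hdM]
    exact hg3
  · rw [sv_eq_sqrt_dSq, sv_eq_sqrt_dSq, div_le_iff₀ (Real.sqrt_pos.mpr hMjpos)]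
    rw [← Real.sqrt_mul (by linarith : (0:ℝ) ≤ 1 + C)]
    apply Real.sqrt_le_sqrt
    rw [hdM]
    exact hg4
  · have h := hentry i j
    have h2 : ((R11⁻¹ * R12) i j)^2 ≤ f^2 := by nlinarith [sq_nonneg (omega_ R11 i * gamma_ R22 j)]
    calc |(R11⁻¹ * R12) i j| = Real.sqrt (((R11⁻¹ * R12) i j)^2) :=
          (Real.sqrt_sq_eq_abs _).symm
      _ ≤ Real.sqrt (f^2) := Real.sqrt_le_sqrt h2
      _ = f := Real.sqrt_sq hf0

end RRQR

/-- deterministic strong RRQR bounds (Gu–Eisenstat). -/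
theorem stmt_0 {k m' n' : ℕ} (hmn : n' ≤ m')
    (M : Matrix (Fin (k + m')) (Fin (k + n')) ℝ)
    (Pi : Matrix (Fin (k + n')) (Fin (k + n')) ℝ) (hPi : IsPermMatrix Pi)
    (Q : Matrix (Fin (k + m')) (Fin (k + m')) ℝ)
    (R11 : Matrix (Fin k) (Fin k) ℝ) (R12 : Matrix (Fin k) (Fin n') ℝ)
    (R22 : Matrix (Fin m') (Fin n') ℝ)
    (hQR : PartialQR (M * Pi) Q R11 R12 R22) (hR11 : IsUnit R11.det)
    (f : ℝ) (hf : 1 ≤ f) (hrho : rho R11 R12 R22 ≤ f) :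
    ∀ (i : Fin k) (j : Fin n'), singularValues M (Fin.natAdd k j) ≠ 0 →
      (1 ≤ singularValues M (Fin.castAdd n' i) / singularValues R11 i ∧
        singularValues M (Fin.castAdd n' i) / singularValues R11 i ≤
          Real.sqrt (1 + f ^ 2 * k * n')) ∧
      (1 ≤ singularValues R22 j / singularValues M (Fin.natAdd k j) ∧
        singularValues R22 j / singularValues M (Fin.natAdd k j) ≤
          Real.sqrt (1 + f ^ 2 * k * n')) ∧
      |(R11⁻¹ * R12) i j| ≤ f := by
  exact RRQR.main hmn M Pi hPi Q R11 R12 R22 hQR hR11 f hf hrho
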